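/- In the two-factor Flesaker–Hughston model with A_t = f(t) + g(t) M_t, where f, g are strictly positive decreasing functions with F = Σ_i f(T_i) < ∞ and G = Σ_i g(T_i) < ∞, and M a strictly positive càdlàg martingale with M_0 = 1, the weighted bond sums S_n(t) = δ Σ_{i=1}^n P(t,T_i) with P(t,T) = (f(T) + g(T)M_t)/(f(t) + g(t)M_t) converge in ucp to S_∞(t) = δ(F + G M_t)/(f(t) + g(t)M_t), and hence the long-term swap rate equals R_t = (f(t) + g(t)M_t)/(δ(F + G M_t)) a.s. for all t ≥ 0. -/

import Mathlib

/-!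
Everything is deterministic and uniform in `ω`. For `0 ≤ s ≤ t`, monotonicity of `f` and `g`
bounds the bond price `P(s, T_i) = (f(T_i) + g(T_i) M_s)/(f(s) + g(s) M_s)` by
`f(T_i)/f(t) + g(T_i)/g(t)`, a summable majorant independent of `s` and `ω` (this is the bound
`M_s/(f(s) + g(s) M_s) ≤ 1/g(t)`). By the Weierstrass M-test the bond sums converge uniformly on
`[0, t] × Ω`, which is stronger than ucp convergence. Both `S_n` (for `n ≥ 1`) and `S_∞` dominate
`δ P(s, T_1) ≥ δ min(f(T_1)/f(0), g(T_1)/g(0)) > 0`, and `P(s, T_n) → 0` uniformly, so the swap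
rates `(1 - P(s, T_n))/S_n(s)` converge uniformly to `1/S_∞(s)`.
-/

open MeasureTheory Filter Set

variable {Ω : Type*} [MeasurableSpace Ω]

/-- Uniform convergence on compacts in probability (ucp). -/
def UcpTendsto (μ : Measure Ω) (X : ℕ → ℝ → Ω → ℝ) (Y : ℝ → Ω → ℝ) : Prop :=
  ∀ t > (0 : ℝ), ∀ ε > (0 : ℝ),
    Tendsto (fun n => μ {ω | ∃ s ∈ Icc (0 : ℝ) t, ε < |X n s ω - Y s ω|}) atTop (nhds 0)

/-- Convergence to `+∞` uniformly on compacts in probability. -/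
def UcpTendstoTop (μ : Measure Ω) (X : ℕ → ℝ → Ω → ℝ) : Prop :=
  ∀ t > (0 : ℝ), ∀ M > (0 : ℝ),
    Tendsto (fun n => μ {ω | ∀ s ∈ Icc (0 : ℝ) t, M < X n s ω}) atTop (nhds 1)

/-- Convergence to `-∞` uniformly on compacts in probability. -/
def UcpTendstoBot (μ : Measure Ω) (X : ℕ → ℝ → Ω → ℝ) : Prop :=
  ∀ t > (0 : ℝ), ∀ M > (0 : ℝ),
    Tendsto (fun n => μ {ω | ∀ s ∈ Icc (0 : ℝ) t, X n s ω < -M}) atTop (nhds 1)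

/-- Weighted partial sums `S_n(t) = ∑_{i=1}^n (T_i - T_{i-1}) P(t, T_i)` of bond prices. -/
noncomputable def bondSum (T : ℕ → ℝ) (B : ℕ → ℝ → Ω → ℝ) (n : ℕ) (t : ℝ) (ω : Ω) : ℝ :=
  ∑ i ∈ Finset.Icc 1 n, (T i - T (i - 1)) * B i t ω

/-- OIS swap rate with maturity `T n`: `R(t,T_n) = (1 - P(t,T_n))/S_n(t)`. -/
noncomputable def swapRate (T : ℕ → ℝ) (B : ℕ → ℝ → Ω → ℝ) (n : ℕ) (t : ℝ) (ω : Ω) : ℝ :=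
  (1 - B n t ω) / bondSum T B n t ω

/-- Yield with maturity `T n`: `Y(t,T_n) = - log P(t,T_n)/(T_n - t)`. -/
noncomputable def yield (T : ℕ → ℝ) (B : ℕ → ℝ → Ω → ℝ) (n : ℕ) (t : ℝ) (ω : Ω) : ℝ :=
  -Real.log (B n t ω) / (T n - t)

/-- Simple spot rate with maturity `T n`: `L(t,T_n) = (1/P(t,T_n) - 1)/(T_n - t)`. -/
noncomputable def simpleRate (T : ℕ → ℝ) (B : ℕ → ℝ → Ω → ℝ) (n : ℕ) (t : ℝ) (ω : Ω) : ℝ :=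
  (1 / B n t ω - 1) / (T n - t)

theorem abs_one_sub_div_sub_one_div_le {p S Y c : ℝ} (hc : 0 < c) (hS : c ≤ S) (hY : c ≤ Y) :
    |(1 - p) / S - 1 / Y| ≤ |Y - S| / c ^ 2 + |p| / c := by
  have hS₀ : 0 < S := hc.trans_le hS
  have hY₀ : 0 < Y := hc.trans_le hY
  have hsplit : (1 - p) / S - 1 / Y = (Y - S) / (S * Y) - p / S := by field_simp; ring
  calc |(1 - p) / S - 1 / Y| ≤ |(Y - S) / (S * Y)| + |p / S| := by rw [hsplit]; exact abs_sub _ _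
    _ ≤ |Y - S| / c ^ 2 + |p| / c := by
      rw [abs_div, abs_div, abs_of_pos (mul_pos hS₀ hY₀), abs_of_pos hS₀, sq]
      gcongr

theorem add_mul_div_add_mul_le {a b c d x : ℝ} (ha : 0 ≤ a) (hb : 0 ≤ b) (hc : 0 < c)
    (hd : 0 < d) (hx : 0 ≤ x) : (a + b * x) / (c + d * x) ≤ a / c + b / d := by
  have hcdx : 0 < c + d * x := by positivity
  rw [add_div]
  gcongr ?_ + ?_
  · exact div_le_div_of_nonneg_left ha hc (le_add_of_nonneg_right (by positivity))
  · rw [div_le_div_iff₀ hcdx hd]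
    nlinarith [mul_nonneg hb hc.le]

theorem min_div_le_add_mul_div_add_mul {a b c d x : ℝ} (hc : 0 < c) (hd : 0 < d) (hx : 0 ≤ x) :
    min (a / c) (b / d) ≤ (a + b * x) / (c + d * x) := by
  have hac : min (a / c) (b / d) * c ≤ a := (le_div_iff₀ hc).1 (min_le_left _ _)
  have hbd : min (a / c) (b / d) * d ≤ b := (le_div_iff₀ hd).1 (min_le_right _ _)
  rw [le_div_iff₀ (by positivity)]
  nlinarith [mul_le_mul_of_nonneg_right hbd hx]

theorem tendstoUniformlyOn_of_dist_le {ι α β : Type*} [PseudoMetricSpace β] {l : Filter ι}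
    {s : Set α} {F : ι → α → β} {f : α → β} {e : ι → ℝ} (he : Tendsto e l (nhds 0))
    (h : ∀ᶠ i in l, ∀ x ∈ s, dist (f x) (F i x) ≤ e i) : TendstoUniformlyOn F f l s :=
  Metric.tendstoUniformlyOn_iff.2 fun _ hε =>
    (h.and (he.eventually_lt_const hε)).mono fun _ hi x hx => (hi.1 x hx).trans_lt hi.2

theorem TendstoUniformlyOn.one_sub_div {ι α : Type*} {l : Filter ι} {s : Set α}
    {P S : ι → α → ℝ} {Y : α → ℝ} {c : ℝ} (hc : 0 < c)
    (hP : TendstoUniformlyOn P 0 l s) (hS : TendstoUniformlyOn S Y l s)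
    (hSc : ∀ᶠ i in l, ∀ x ∈ s, c ≤ S i x) (hYc : ∀ x ∈ s, c ≤ Y x) :
    TendstoUniformlyOn (fun i x => (1 - P i x) / S i x) (fun x => 1 / Y x) l s := by
  refine Metric.tendstoUniformlyOn_iff.2 fun ε hε => ?_
  filter_upwards [Metric.tendstoUniformlyOn_iff.1 hP (ε * c / 2) (by positivity),
    Metric.tendstoUniformlyOn_iff.1 hS (ε * c ^ 2 / 2) (by positivity), hSc]
    with i hPi hSi hci x hx
  have hP' : |P i x| < ε * c / 2 := by simpa [Real.dist_eq, abs_sub_comm] using hPi x hx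
  have hS' : |Y x - S i x| < ε * c ^ 2 / 2 := by simpa [Real.dist_eq] using hSi x hx
  rw [Real.dist_eq, abs_sub_comm]
  calc |(1 - P i x) / S i x - 1 / Y x| ≤ |Y x - S i x| / c ^ 2 + |P i x| / c :=
        abs_one_sub_div_sub_one_div_le hc (hci x hx) (hYc x hx)
    _ < ε * c ^ 2 / 2 / c ^ 2 + ε * c / 2 / c := by gcongr
    _ = ε := by field_simp; ring

theorem UcpTendsto.of_tendstoUniformlyOn {μ : Measure Ω} {X : ℕ → ℝ → Ω → ℝ} {Y : ℝ → Ω → ℝ}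
    (h : ∀ t > (0 : ℝ), TendstoUniformlyOn (fun n (p : ℝ × Ω) => X n p.1 p.2)
      (fun p => Y p.1 p.2) atTop (Icc 0 t ×ˢ univ)) :
    UcpTendsto μ X Y := by
  intro t ht ε hε
  refine tendsto_const_nhds.congr' ?_
  filter_upwards [Metric.tendstoUniformlyOn_iff.1 (h t ht) ε hε] with n hn
  have hempty : {ω | ∃ s ∈ Icc (0 : ℝ) t, ε < |X n s ω - Y s ω|} = ∅ := by
    refine eq_empty_iff_forall_notMem.2 fun ω ⟨s, hs, hε'⟩ => hε'.not_gt ?_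
    simpa [Real.dist_eq, abs_sub_comm] using hn (s, ω) ⟨hs, mem_univ ω⟩
  rw [hempty, measure_empty]

section BondSums

variable {Ω : Type*} {T : ℕ → ℝ} {B : ℕ → ℝ → Ω → ℝ} {δ : ℝ}

theorem bondSum_eq_sum_range (hten : ∀ n, T (n + 1) = T n + δ) (n : ℕ) (t : ℝ) (ω : Ω) :
    bondSum T B n t ω = ∑ i ∈ Finset.range n, δ * B (i + 1) t ω := by
  induction n with
  | zero => simp [bondSum]
  | succ n ih =>
    rw [Finset.sum_range_succ, ← ih, bondSum, bondSum, Finset.sum_Icc_succ_top (by omega),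
      Nat.add_sub_cancel, hten, add_sub_cancel_left]

theorem tendstoUniformlyOn_bondSum (hδ : 0 ≤ δ) (hten : ∀ n, T (n + 1) = T n + δ)
    {u : ℕ → ℝ} (hu : Summable u) {s : Set (ℝ × Ω)} (hB : ∀ i, ∀ p ∈ s, |B i p.1 p.2| ≤ u i) :
    TendstoUniformlyOn (fun n (p : ℝ × Ω) => bondSum T B n p.1 p.2)
      (fun p => ∑' i, δ * B (i + 1) p.1 p.2) atTop s := by
  simp_rw [bondSum_eq_sum_range hten]
  refine tendstoUniformlyOn_tsum_nat ((summable_nat_add_iff 1).2 hu |>.mul_left δ)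
    fun i p hp => ?_
  rw [Real.norm_eq_abs, abs_mul, abs_of_nonneg hδ]
  exact mul_le_mul_of_nonneg_left (hB (i + 1) p hp) hδ

theorem tendstoUniformlyOn_swapRate (hδ : 0 < δ) (hten : ∀ n, T (n + 1) = T n + δ)
    {u : ℕ → ℝ} (hu : Summable u) {s : Set (ℝ × Ω)} (hB : ∀ i, ∀ p ∈ s, |B i p.1 p.2| ≤ u i)
    (hB₀ : ∀ i, ∀ p ∈ s, 0 ≤ B i p.1 p.2) {c : ℝ} (hc : 0 < c)
    (hB₁ : ∀ p ∈ s, c ≤ B 1 p.1 p.2) :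
    TendstoUniformlyOn (fun n (p : ℝ × Ω) => swapRate T B n p.1 p.2)
      (fun p => 1 / ∑' i, δ * B (i + 1) p.1 p.2) atTop s := by
  have hP : TendstoUniformlyOn (fun n (p : ℝ × Ω) => B n p.1 p.2) 0 atTop s :=
    tendstoUniformlyOn_of_dist_le hu.tendsto_atTop_zero <| .of_forall fun n p hp => by
      simpa [Real.dist_eq] using hB n p hp
  have hSc : ∀ᶠ n in atTop, ∀ p ∈ s, δ * c ≤ bondSum T B n p.1 p.2 := by
    filter_upwards [eventually_ge_atTop 1] with n hn p hp
    rw [bondSum_eq_sum_range hten]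
    calc δ * c ≤ δ * B (0 + 1) p.1 p.2 := mul_le_mul_of_nonneg_left (hB₁ p hp) hδ.le
      _ ≤ _ := Finset.single_le_sum (f := fun i => δ * B (i + 1) p.1 p.2)
          (fun i _ => mul_nonneg hδ.le (hB₀ _ p hp)) (Finset.mem_range.2 hn)
  have hYc : ∀ p ∈ s, δ * c ≤ ∑' i, δ * B (i + 1) p.1 p.2 := fun p hp => by
    have hsummable : Summable fun i => δ * B (i + 1) p.1 p.2 :=
      .of_nonneg_of_le (fun i => mul_nonneg hδ.le (hB₀ _ p hp))
        (fun i => mul_le_mul_of_nonneg_left ((le_abs_self _).trans (hB (i + 1) p hp)) hδ.le)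
        ((summable_nat_add_iff 1).2 hu |>.mul_left δ)
    calc δ * c ≤ δ * B (0 + 1) p.1 p.2 := mul_le_mul_of_nonneg_left (hB₁ p hp) hδ.le
      _ ≤ _ := hsummable.le_tsum 0 fun i _ => mul_nonneg hδ.le (hB₀ _ p hp)
  exact hP.one_sub_div (mul_pos hδ hc) (tendstoUniformlyOn_bondSum hδ.le hten hu hB) hSc hYc

end BondSums

theorem tsum_mul_add_mul_div {a b : ℕ → ℝ} (ha : Summable a) (hb : Summable b) (δ x D : ℝ) :
    ∑' i, δ * ((a i + b i * x) / D) = δ * ((∑' i, a i) + (∑' i, b i) * x) / D := by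
  rw [tsum_mul_left, tsum_div_const, ha.tsum_add (hb.mul_right x), tsum_mul_right, mul_div_assoc]

section Antitone

variable {f g : ℝ → ℝ}

theorem add_mul_div_le_of_antitone (hfpos : ∀ t, 0 < f t) (hgpos : ∀ t, 0 < g t)
    (hf : Antitone f) (hg : Antitone g) {a b s t x : ℝ} (ha : 0 ≤ a) (hb : 0 ≤ b) (hst : s ≤ t)
    (hx : 0 ≤ x) : (a + b * x) / (f s + g s * x) ≤ a / f t + b / g t :=
  (add_mul_div_add_mul_le ha hb (hfpos s) (hgpos s) hx).trans <|
    add_le_add (div_le_div_of_nonneg_left ha (hfpos t) (hf hst))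
      (div_le_div_of_nonneg_left hb (hgpos t) (hg hst))

theorem min_div_le_add_mul_div_of_antitone (hfpos : ∀ t, 0 < f t) (hgpos : ∀ t, 0 < g t)
    (hf : Antitone f) (hg : Antitone g) {a b s x : ℝ} (ha : 0 ≤ a) (hb : 0 ≤ b) (hs : 0 ≤ s)
    (hx : 0 ≤ x) : min (a / f 0) (b / g 0) ≤ (a + b * x) / (f s + g s * x) :=
  (min_le_min (div_le_div_of_nonneg_left ha (hfpos s) (hf hs))
    (div_le_div_of_nonneg_left hb (hgpos s) (hg hs))).trans
      (min_div_le_add_mul_div_add_mul (hfpos s) (hgpos s) hx)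

end Antitone

theorem flesakerHughston_longTermSwapRate_general
    (μ : Measure Ω)
    (T : ℕ → ℝ) (B : ℕ → ℝ → Ω → ℝ) (δ : ℝ)
    (hδ : 0 < δ) (hten : ∀ n : ℕ, T (n + 1) = T n + δ)
    (f g : ℝ → ℝ)
    (hfpos : ∀ t, 0 < f t) (hgpos : ∀ t, 0 < g t)
    (hfdec : Antitone f) (hgdec : Antitone g)
    (M : ℝ → Ω → ℝ)
    (hMpos : ∀ t ω, 0 < M t ω)
    (hFsum : Summable (fun i : ℕ => f (T (i + 1))))
    (hGsum : Summable (fun i : ℕ => g (T (i + 1))))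
    (hbond : ∀ n t ω, B n t ω = (f (T n) + g (T n) * M t ω) / (f t + g t * M t ω)) :
    UcpTendsto μ (bondSum T B)
      (fun t ω => δ * ((∑' i : ℕ, f (T (i + 1))) + (∑' i : ℕ, g (T (i + 1))) * M t ω)
        / (f t + g t * M t ω)) ∧
    UcpTendsto μ (swapRate T B)
      (fun t ω => (f t + g t * M t ω)
        / (δ * ((∑' i : ℕ, f (T (i + 1))) + (∑' i : ℕ, g (T (i + 1))) * M t ω))) := by
  have hB₀ : ∀ i s ω, 0 ≤ B i s ω := fun i s ω => by
    rw [hbond]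
    exact div_nonneg (add_pos (hfpos _) (mul_pos (hgpos _) (hMpos s ω))).le
      (add_pos (hfpos s) (mul_pos (hgpos s) (hMpos s ω))).le
  have hB_le : ∀ t i, ∀ p ∈ Icc 0 t ×ˢ (univ : Set Ω),
      |B i p.1 p.2| ≤ f (T i) / f t + g (T i) / g t := fun t i p hp => by
    rw [abs_of_nonneg (hB₀ i p.1 p.2), hbond]
    exact add_mul_div_le_of_antitone hfpos hgpos hfdec hgdec (hfpos _).le (hgpos _).le hp.1.2
      (hMpos _ _).le
  have hsummable : ∀ t, Summable fun i => f (T i) / f t + g (T i) / g t := fun t =>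
    (((summable_nat_add_iff (f := fun i => f (T i)) 1).1 hFsum).div_const _).add
      (((summable_nat_add_iff (f := fun i => g (T i)) 1).1 hGsum).div_const _)
  have hB₁ : ∀ t, ∀ p ∈ Icc 0 t ×ˢ (univ : Set Ω),
      min (f (T 1) / f 0) (g (T 1) / g 0) ≤ B 1 p.1 p.2 := fun t p hp => by
    rw [hbond]
    exact min_div_le_add_mul_div_of_antitone hfpos hgpos hfdec hgdec (hfpos _).le (hgpos _).le
      hp.1.1 (hMpos _ _).le
  have hc : 0 < min (f (T 1) / f 0) (g (T 1) / g 0) :=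
    lt_min (div_pos (hfpos _) (hfpos 0)) (div_pos (hgpos _) (hgpos 0))
  have hlim : ∀ s ω, ∑' i, δ * B (i + 1) s ω
      = δ * ((∑' i, f (T (i + 1))) + (∑' i, g (T (i + 1))) * M s ω) / (f s + g s * M s ω) :=
    fun s ω => by simp_rw [hbond]; exact tsum_mul_add_mul_div hFsum hGsum _ _ _
  refine ⟨.of_tendstoUniformlyOn fun t _ => ?_, .of_tendstoUniformlyOn fun t _ => ?_⟩
  · simpa only [hlim] using tendstoUniformlyOn_bondSum hδ.le hten (hsummable t) (hB_le t)
  · simpa only [hlim, one_div_div] using tendstoUniformlyOn_swapRate hδ hten (hsummable t)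
      (hB_le t) (fun i p _ => hB₀ i p.1 p.2) hc (hB₁ t)

/-- in the Flesaker–Hughston model `A_t = f(t) + g(t) M_t`, with `f, g`
strictly positive decreasing with summable values along the tenor and `M` a strictly
positive càdlàg martingale with `M_0 = 1`, the bond sums `S_n` converge in ucp to
`S_∞(t) = δ (F + G M_t)/(f(t) + g(t) M_t)` and the swap rates converge in ucp to the
long-term swap rate `R_t = (f(t) + g(t) M_t)/(δ (F + G M_t))`. -/
theorem flesakerHughston_longTermSwapRate
    {m : MeasurableSpace Ω} (μ : Measure Ω) [IsProbabilityMeasure μ]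
    (ℱ : Filtration ℝ m)
    (T : ℕ → ℝ) (B : ℕ → ℝ → Ω → ℝ) (δ : ℝ)
    (hδ : 0 < δ) (hT0 : 0 ≤ T 0) (hten : ∀ n : ℕ, T (n + 1) = T n + δ)
    (f g : ℝ → ℝ)
    (hfpos : ∀ t, 0 < f t) (hgpos : ∀ t, 0 < g t)
    (hfdec : Antitone f) (hgdec : Antitone g)
    (M : ℝ → Ω → ℝ)
    (hM : Martingale M ℱ μ)
    (hMpos : ∀ t ω, 0 < M t ω)
    (hMrc : ∀ ω t, ContinuousWithinAt (fun s => M s ω) (Ici t) t)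
    (hM0 : ∀ ω, M 0 ω = 1)
    (hFsum : Summable (fun i : ℕ => f (T (i + 1))))
    (hGsum : Summable (fun i : ℕ => g (T (i + 1))))
    (hbond : ∀ n t ω, B n t ω = (f (T n) + g (T n) * M t ω) / (f t + g t * M t ω)) :
    UcpTendsto μ (bondSum T B)
      (fun t ω => δ * ((∑' i : ℕ, f (T (i + 1))) + (∑' i : ℕ, g (T (i + 1))) * M t ω)
        / (f t + g t * M t ω)) ∧
    UcpTendsto μ (swapRate T B)
      (fun t ω => (f t + g t * M t ω)
        / (δ * ((∑' i : ℕ, f (T (i + 1))) + (∑' i : ℕ, g (T (i + 1))) * M t ω))) :=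
  flesakerHughston_longTermSwapRate_general μ T B δ hδ hten f g hfpos hgpos hfdec hgdec M hMpos
    hFsum hGsum hbond
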